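/- arXiv:2303.01128 — 4 statements merged into one kernel-verified Lean document; each statement's English description precedes it below -/
import Mathlib

section
/- Let 1 ≤ a < b be integers and let s ∈ [-1, 0) be real. Then (1/(2πi)) · ∫₀¹ (γ_{a,b}^s)'(t) / γ_{a,b}^s(t) dt = a; that is, the winding number of the closed curve γ_{a,b}^s around the origin equals a. -/
/-- The weighted sum of two exponentials
`γ_{a,b}^s(t) = (1-s)·exp(2πi a t) + (1+s)·exp(2πi b t)`. -/
noncomputable def gammaCurve (a b : ℤ) (s t : ℝ) : ℂ :=
  (1 - (s : ℂ)) * Complex.exp (2 * Real.pi * Complex.I * a * t) +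
    (1 + (s : ℂ)) * Complex.exp (2 * Real.pi * Complex.I * b * t)

private lemma hasDerivAt_cexp_mul (w : ℂ) (t : ℝ) :
    HasDerivAt (fun t : ℝ => Complex.exp (w * t)) (w * Complex.exp (w * t)) t := by
  have hid : HasDerivAt (fun t : ℝ => (t : ℂ)) 1 t := by
    simpa using (hasDerivAt_id t).ofReal_comp
  have := (hid.const_mul w).cexp
  simpa [mul_comm] using this

/-- For `s ∈ [-1, 0)` the winding number of `γ_{a,b}^s` around the origin equals `a`. -/
theorem winding_number_eq_a (a b : ℤ) (ha : 1 ≤ a) (hab : a < b)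
    (s : ℝ) (hs : s ∈ Set.Ico (-1 : ℝ) 0) :
    (1 / (2 * Real.pi * Complex.I)) *
      ∫ t in (0:ℝ)..1, deriv (gammaCurve a b s) t / gammaCurve a b s t = a := by
  obtain ⟨hs1, hs0⟩ := hs
  have h1s : (0:ℝ) < 1 - s := by linarith
  set r : ℝ := (1 + s) / (1 - s) with hr_def
  have hr0 : 0 ≤ r := div_nonneg (by linarith) h1s.le
  have hr1 : r < 1 := (div_lt_one h1s).2 (by linarith)
  set c : ℂ := 2 * Real.pi * Complex.I with hc_def
  have hc0 : c ≠ 0 := by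
    simp only [hc_def]
    intro h
    simp [Complex.ext_iff, Real.pi_ne_zero] at h
  set h : ℝ → ℂ := fun t => 1 + (r : ℂ) * Complex.exp (c * ((b : ℂ) - a) * t) with hh_def
  -- the exponential in h has modulus 1
  have habs : ∀ t : ℝ, ‖Complex.exp (c * ((b : ℂ) - a) * t)‖ = 1 := by
    intro t
    have heq : c * ((b : ℂ) - a) * t = ((2 * Real.pi * ((b : ℝ) - a) * t : ℝ) : ℂ) * Complex.I := by
      simp only [hc_def]; push_cast; ring
    rw [heq, Complex.norm_exp_ofReal_mul_I]
  -- real part of h is positive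
  have hre : ∀ t : ℝ, 0 < (h t).re := by
    intro t
    have hb := Complex.abs_re_le_norm ((r : ℂ) * Complex.exp (c * ((b : ℂ) - a) * t))
    rw [norm_mul, habs t, mul_one, Complex.norm_of_nonneg hr0] at hb
    have : (h t).re = 1 + ((r : ℂ) * Complex.exp (c * ((b : ℂ) - a) * t)).re := by
      simp [hh_def]
    rw [this]
    have := abs_le.1 hb
    linarith [this.1]
  have hhne : ∀ t : ℝ, h t ≠ 0 := by
    intro t h0
    have := hre t
    rw [h0] at this
    simp at this
  have hslit : ∀ t : ℝ, h t ∈ Complex.slitPlane := fun t =>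
    Complex.mem_slitPlane_iff.2 (Or.inl (hre t))
  have hsne : (1 : ℂ) - s ≠ 0 := by
    intro h0
    have : ((1 - s : ℝ) : ℂ) = 0 := by push_cast; linear_combination h0
    exact (ne_of_gt h1s) (by exact_mod_cast this)
  have hrs : ((1 : ℂ) - s) * r = 1 + s := by
    have : ((r : ℝ) : ℂ) = ((1 + s : ℝ) : ℂ) / ((1 - s : ℝ) : ℂ) := by
      rw [hr_def]; push_cast; ring
    rw [this]
    push_cast
    field_simp
  have hmul : ∀ t : ℝ, Complex.exp (c * a * t) * Complex.exp (c * ((b : ℂ) - a) * t)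
      = Complex.exp (c * b * t) := by
    intro t
    rw [← Complex.exp_add]
    ring_nf
  -- factorization of gammaCurve
  have hfact : ∀ t : ℝ, gammaCurve a b s t = (1 - (s : ℂ)) * Complex.exp (c * a * t) * h t := by
    intro t
    unfold gammaCurve
    rw [hh_def]
    have expand : (1 - (s:ℂ)) * Complex.exp (c * a * t) *
        (1 + (r : ℂ) * Complex.exp (c * ((b : ℂ) - a) * t))
        = (1 - (s:ℂ)) * Complex.exp (c * a * t) +
          ((1 - (s:ℂ)) * r) * (Complex.exp (c * a * t) * Complex.exp (c * ((b : ℂ) - a) * t)) := by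
      ring
    rw [expand, hrs, hmul t, hc_def]
  have hγ : ∀ t : ℝ, gammaCurve a b s t ≠ 0 := by
    intro t
    rw [hfact t]
    exact mul_ne_zero (mul_ne_zero hsne (Complex.exp_ne_zero _)) (hhne t)
  -- derivative of gammaCurve
  have hG : ∀ t : ℝ, HasDerivAt (gammaCurve a b s)
      ((1 - (s:ℂ)) * (c * a * Complex.exp (c * a * t)) +
        (1 + (s:ℂ)) * (c * b * Complex.exp (c * b * t))) t := by
    intro t
    have h1 := (hasDerivAt_cexp_mul (c * a) t).const_mul (1 - (s:ℂ))
    have h2 := (hasDerivAt_cexp_mul (c * b) t).const_mul (1 + (s:ℂ))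
    have := h1.add h2
    unfold gammaCurve
    rw [hc_def] at this ⊢
    exact this
  -- derivative of h
  have hdh : ∀ t : ℝ, HasDerivAt h
      ((r : ℂ) * (c * ((b : ℂ) - a) * Complex.exp (c * ((b : ℂ) - a) * t))) t := by
    intro t
    have := ((hasDerivAt_cexp_mul (c * ((b : ℂ) - a)) t).const_mul (r : ℂ)).const_add 1
    exact this
  -- the primitive
  set F : ℝ → ℂ := fun t => c * a * t + Complex.log (h t) with hF_def
  have hF : ∀ t : ℝ, HasDerivAt F
      (deriv (gammaCurve a b s) t / gammaCurve a b s t) t := by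
    intro t
    have hid : HasDerivAt (fun t : ℝ => (t : ℂ)) 1 t := by
      simpa using (hasDerivAt_id t).ofReal_comp
    have hd1 : HasDerivAt (fun t : ℝ => c * a * t) (c * a) t := by
      simpa using hid.const_mul (c * a)
    have hlog : HasDerivAt (Complex.log ∘ h)
        ((h t)⁻¹ * ((r : ℂ) * (c * ((b : ℂ) - a) * Complex.exp (c * ((b : ℂ) - a) * t)))) t :=
      (Complex.hasDerivAt_log (hslit t)).comp t (hdh t)
    have htot := hd1.add hlog
    have hval : c * a + (h t)⁻¹ * ((r : ℂ) * (c * ((b : ℂ) - a) * Complex.exp (c * ((b : ℂ) - a) * t)))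
        = deriv (gammaCurve a b s) t / gammaCurve a b s t := by
      rw [(hG t).deriv, hfact t]
      rw [eq_div_iff (mul_ne_zero (mul_ne_zero hsne (Complex.exp_ne_zero _)) (hhne t))]
      rw [← hmul t, ← hrs]
      have hht : h t = 1 + (r : ℂ) * Complex.exp (c * ((b : ℂ) - a) * t) := by rw [hh_def]
      rw [hht]
      field_simp [hht ▸ hhne t]
      ring
    rw [← hval]
    exact htot
  -- integrability of the integrand
  have hcontG : Continuous fun t : ℝ =>
      (1 - (s:ℂ)) * (c * a * Complex.exp (c * a * t)) +
        (1 + (s:ℂ)) * (c * b * Complex.exp (c * b * t)) := by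
    fun_prop
  have hcontγ : Continuous (gammaCurve a b s) := by
    unfold gammaCurve; fun_prop
  have hderiv_eq : (fun t : ℝ => deriv (gammaCurve a b s) t / gammaCurve a b s t)
      = fun t : ℝ => ((1 - (s:ℂ)) * (c * a * Complex.exp (c * a * t)) +
          (1 + (s:ℂ)) * (c * b * Complex.exp (c * b * t))) / gammaCurve a b s t := by
    funext t
    rw [(hG t).deriv]
  have hintg : IntervalIntegrable
      (fun t : ℝ => deriv (gammaCurve a b s) t / gammaCurve a b s t)
      MeasureTheory.volume 0 1 := by
    rw [hderiv_eq]
    exact ((hcontG.continuousOn.div hcontγ.continuousOn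
      (fun t _ => hγ t)).intervalIntegrable)
  have hint := intervalIntegral.integral_eq_sub_of_hasDerivAt (fun t _ => hF t) hintg
  rw [hint]
  -- compute F 1 - F 0
  have hexp1 : Complex.exp (c * ((b : ℂ) - a) * (1 : ℝ)) = 1 := by
    have heq : c * ((b : ℂ) - a) * ((1 : ℝ) : ℂ) = ((b - a : ℤ) : ℂ) * (2 * Real.pi * Complex.I) := by
      rw [hc_def]; push_cast; ring
    rw [heq, Complex.exp_int_mul_two_pi_mul_I]
  have hexp0 : Complex.exp (c * ((b : ℂ) - a) * (0 : ℝ)) = 1 := by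
    norm_num
  have hF1 : F 1 = c * a + Complex.log (1 + r) := by
    rw [hF_def]
    simp only [hh_def, hexp1]
    norm_num
  have hF0 : F 0 = Complex.log (1 + r) := by
    rw [hF_def]
    simp only [hh_def, hexp0]
    norm_num
  rw [hF1, hF0]
  have : c * a + Complex.log (1 + r) - Complex.log (1 + r) = c * a := by ring
  rw [this, hc_def]
  have hπI : (2 * (Real.pi : ℂ) * Complex.I) ≠ 0 := by rw [← hc_def]; exact hc0
  field_simp
end

section
/- Let α, β be real numbers with β > 0 and β < |α|. Then ∫₀¹ 1/(β + α·exp(2πi t)) dt = 0, where the integrand is a complex-valued function of the real variable t. -/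
open Complex Real

/-- If `β > 0` and `β < |α|`, then `∫₀¹ 1/(β + α·exp(2πi t)) dt = 0`. -/
theorem integral_eq_zero (α β : ℝ) (hβ : 0 < β) (h : β < |α|) :
    ∫ t in (0:ℝ)..1, 1 / ((β : ℂ) + (α : ℂ) * Complex.exp (2 * Real.pi * Complex.I * t)) =
      0 := by
  have hα : α ≠ 0 := by
    intro h0
    rw [h0, abs_zero] at h
    linarith
  have hα' : (α : ℂ) ≠ 0 := by exact_mod_cast hα
  have hβ' : (β : ℂ) ≠ 0 := by exact_mod_cast hβ.ne'
  have hαabs : ‖(α : ℂ)‖ = |α| := by rw [Complex.norm_real, Real.norm_eq_abs]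
  set w : ℂ := -((β : ℂ) / (α : ℂ)) with hw_def
  have hwabs : ‖w‖ < 1 := by
    rw [hw_def, norm_neg, norm_div, Complex.norm_real, Complex.norm_real, Real.norm_eq_abs, Real.norm_eq_abs,
      abs_of_pos hβ, div_lt_one (abs_pos.mpr hα)]
    exact h
  have hw : w ∈ Metric.ball (0 : ℂ) 1 := by
    rw [Metric.mem_ball, dist_zero_right]
    exact hwabs
  -- nonvanishing of denominators
  have hne1 : ∀ θ : ℝ, (β : ℂ) + (α : ℂ) * Complex.exp (θ * Complex.I) ≠ 0 := by
    intro θ hzero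
    have habs : ‖(α : ℂ) * Complex.exp (θ * Complex.I)‖ = |α| := by
      rw [norm_mul, Complex.norm_exp_ofReal_mul_I, mul_one, hαabs]
    have : (α : ℂ) * Complex.exp (θ * Complex.I) = -(β : ℂ) := by linear_combination hzero
    rw [this] at habs
    simp only [norm_neg, Complex.norm_real, Real.norm_eq_abs, abs_of_pos hβ] at habs
    linarith
  have hne2 : ∀ θ : ℝ, Complex.exp (θ * Complex.I) - w ≠ 0 := by
    intro θ hzero
    have : Complex.exp (θ * Complex.I) = w := by linear_combination hzero
    have habs : ‖Complex.exp (θ * Complex.I)‖ = 1 :=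
      Complex.norm_exp_ofReal_mul_I θ
    rw [this] at habs
    linarith
  -- circle integral value
  have hcirc := circleIntegral.integral_sub_inv_of_mem_ball hw
  have key : ∫ θ in (0:ℝ)..2 * π,
      Complex.exp (θ * Complex.I) * Complex.I * (Complex.exp (θ * Complex.I) - w)⁻¹
      = 2 * π * Complex.I := by
    rw [← hcirc]
    simp only [circleIntegral, deriv_circleMap, circleMap, Complex.ofReal_one, one_mul,
      Complex.ofReal_zero, zero_add, smul_eq_mul]
  -- pointwise partial fraction identity
  have hpoint : ∀ θ : ℝ, ((β : ℂ) + (α : ℂ) * Complex.exp (θ * Complex.I))⁻¹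
      = (β : ℂ)⁻¹ - ((β : ℂ) * Complex.I)⁻¹ *
        (Complex.exp (θ * Complex.I) * Complex.I * (Complex.exp (θ * Complex.I) - w)⁻¹) := by
    intro θ
    have h1 := hne1 θ
    have h2 := hne2 θ
    have hI : Complex.I ≠ 0 := Complex.I_ne_zero
    rw [hw_def, sub_neg_eq_add]
    have hrw : Complex.exp (θ * Complex.I) + (β : ℂ) / (α : ℂ)
        = ((β : ℂ) + (α : ℂ) * Complex.exp (θ * Complex.I)) / (α : ℂ) := by
      field_simp
      ring
    rw [hrw, inv_div]
    field_simp
    ring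
  -- continuity / integrability
  have hcont : Continuous fun θ : ℝ =>
      Complex.exp (θ * Complex.I) * Complex.I * (Complex.exp (θ * Complex.I) - w)⁻¹ := by
    have hc1 : Continuous fun θ : ℝ => Complex.exp (θ * Complex.I) :=
      Complex.continuous_exp.comp ((Complex.continuous_ofReal).mul continuous_const)
    exact (hc1.mul continuous_const).mul
      (((hc1.sub continuous_const).inv₀ fun θ => hne2 θ))
  -- integral over [0, 2π] is zero
  have hint2 : ∫ θ in (0:ℝ)..2 * π,
      ((β : ℂ) + (α : ℂ) * Complex.exp (θ * Complex.I))⁻¹ = 0 := by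
    have := intervalIntegral.integral_congr (a := (0:ℝ)) (b := 2 * π) (μ := MeasureTheory.volume)
      (f := fun θ : ℝ => ((β : ℂ) + (α : ℂ) * Complex.exp (θ * Complex.I))⁻¹)
      (g := fun θ : ℝ => (β : ℂ)⁻¹ - ((β : ℂ) * Complex.I)⁻¹ *
        (Complex.exp (θ * Complex.I) * Complex.I * (Complex.exp (θ * Complex.I) - w)⁻¹))
      (fun θ _ => hpoint θ)
    rw [this, intervalIntegral.integral_sub intervalIntegrable_const
      (((show Continuous fun θ : ℝ => ((β : ℂ) * Complex.I)⁻¹ *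
        (Complex.exp (θ * Complex.I) * Complex.I * (Complex.exp (θ * Complex.I) - w)⁻¹) from continuous_const.mul hcont)).intervalIntegrable _ _),
      intervalIntegral.integral_const_mul, key, intervalIntegral.integral_const, sub_zero,
      Complex.real_smul, Complex.ofReal_mul, Complex.ofReal_ofNat]
    field_simp
    ring
  -- substitution θ = 2πt
  have hsubst : (∫ t in (0:ℝ)..1,
      1 / ((β : ℂ) + (α : ℂ) * Complex.exp (2 * Real.pi * Complex.I * t)))
      = ∫ t in (0:ℝ)..1,
        (fun θ : ℝ => ((β : ℂ) + (α : ℂ) * Complex.exp (θ * Complex.I))⁻¹) (2 * π * t) := by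
    apply intervalIntegral.integral_congr
    intro t _
    simp only [one_div]
    congr 2
    push_cast
    ring
  rw [hsubst, intervalIntegral.integral_comp_mul_left
    (fun θ : ℝ => ((β : ℂ) + (α : ℂ) * Complex.exp (θ * Complex.I))⁻¹)
    (by positivity : (2:ℝ) * π ≠ 0)]
  simp only [mul_zero, mul_one]
  rw [hint2, smul_zero]
end

section
/- Let a = 1, b = 3, s ∈ [-1,1] and t ∈ [0,1). Then the derivative (γ_{1,3}^s)'(t) = 0 if and only if s = -1/2 and (t = 1/4 or t = 3/4). In other words, the curve γ_{1,3}^s has a singular point exactly when s = -1/2, and then precisely at the parameters t = 1/4 and t = 3/4. -/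
open Complex Real

lemma cexp_hasDerivAt (c : ℂ) (t : ℝ) :
    HasDerivAt (fun x : ℝ => Complex.exp (c * x)) (Complex.exp (c * t) * c) t := by
  have hb : HasDerivAt (fun x : ℝ => (c * x : ℂ)) c t := by
    simpa using (Complex.ofRealCLM.hasDerivAt (x := t)).const_mul c
  exact hb.cexp

lemma deriv_gamma (s t : ℝ) :
    deriv (gammaCurve 1 3 s) t =
      2 * Real.pi * Complex.I * Complex.exp (2 * Real.pi * Complex.I * t) *
        ((1 - s) + 3 * (1 + s) * Complex.exp (4 * Real.pi * Complex.I * t)) := by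
  have h1 := ((cexp_hasDerivAt (2 * Real.pi * Complex.I) t).const_mul (1 - (s:ℂ)))
  have h3 := ((cexp_hasDerivAt (6 * Real.pi * Complex.I) t).const_mul (1 + (s:ℂ)))
  have h := (h1.add h3)
  have hg : gammaCurve 1 3 s = fun x : ℝ =>
      (1 - (s:ℂ)) * Complex.exp (2 * Real.pi * Complex.I * x) +
        (1 + (s:ℂ)) * Complex.exp (6 * Real.pi * Complex.I * x) := by
    funext x
    simp only [gammaCurve, Int.cast_one, Int.cast_ofNat]
    ring_nf
  rw [hg]; erw [h.deriv]
  have hsplit : (6 : ℂ) * Real.pi * Complex.I * t =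
      2 * Real.pi * Complex.I * t + 4 * Real.pi * Complex.I * t := by ring
  rw [hsplit, Complex.exp_add]
  ring

/-- For `s ∈ [-1,1]` and `t ∈ [0,1)`, the derivative `(γ_{1,3}^s)'(t)` vanishes iff
`s = -1/2` and (`t = 1/4` or `t = 3/4`). -/
theorem gamma_one_three_singular_iff (s : ℝ) (hs : s ∈ Set.Icc (-1 : ℝ) 1)
    (t : ℝ) (ht : t ∈ Set.Ico (0 : ℝ) 1) :
    deriv (gammaCurve 1 3 s) t = 0 ↔ s = -1/2 ∧ (t = 1/4 ∨ t = 3/4) := by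
  obtain ⟨hs1, hs2⟩ := hs
  obtain ⟨ht0, ht1⟩ := ht
  rw [deriv_gamma]
  have hc : (2 : ℂ) * Real.pi * Complex.I ≠ 0 := by
    simp [Real.pi_ne_zero, Complex.I_ne_zero]
  have hexp : Complex.exp (2 * Real.pi * Complex.I * t) ≠ 0 := Complex.exp_ne_zero _
  rw [mul_eq_zero, mul_eq_zero]
  simp only [hc, hexp, false_or]
  constructor
  · intro h
    -- modulus argument
    have habs : ‖(3 * (1 + (s:ℂ)) * Complex.exp (4 * Real.pi * Complex.I * t))‖
        = ‖(1 - (s:ℂ))‖ := by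
      have : (3 : ℂ) * (1 + s) * Complex.exp (4 * Real.pi * Complex.I * t) = -(1 - s) := by
        linear_combination h
      rw [this, norm_neg]
    have habs_exp : ‖(Complex.exp (4 * Real.pi * Complex.I * t))‖ = 1 := by
      rw [Complex.norm_exp]
      have : (4 * (Real.pi:ℂ) * Complex.I * t).re = 0 := by
        simp [Complex.ext_iff, Complex.mul_re, Complex.mul_im]
      rw [this, Real.exp_zero]
    rw [norm_mul, habs_exp, mul_one, norm_mul] at habs
    have h1s : ‖(1 - (s:ℂ))‖ = 1 - s := by
      rw [show (1 - (s:ℂ)) = ((1 - s : ℝ) : ℂ) by push_cast; ring, Complex.norm_real, Real.norm_eq_abs]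
      exact abs_of_nonneg (by linarith)
    have h1s' : ‖(1 + (s:ℂ))‖ = 1 + s := by
      rw [show (1 + (s:ℂ)) = ((1 + s : ℝ) : ℂ) by push_cast; ring, Complex.norm_real, Real.norm_eq_abs]
      exact abs_of_nonneg (by linarith)
    rw [h1s, h1s'] at habs
    simp only [Complex.norm_ofNat] at habs
    have hsval : s = -1/2 := by linarith
    refine ⟨hsval, ?_⟩
    subst hsval
    -- now exp(4πit) = -1
    have hz : Complex.exp (4 * Real.pi * Complex.I * t) = -1 := by
      have h32 : (3/2 : ℂ) * Complex.exp (4 * Real.pi * Complex.I * t) = -(3/2) := by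
        push_cast at h ⊢
        linear_combination h
      have := mul_left_cancel₀ (show (3/2 : ℂ) ≠ 0 by norm_num)
        (by rw [h32]; ring : (3/2 : ℂ) * Complex.exp (4 * Real.pi * Complex.I * t) = (3/2) * (-1))
      exact this
    rw [show (-1 : ℂ) = Complex.exp (Real.pi * Complex.I) by rw [Complex.exp_pi_mul_I],
      Complex.exp_eq_exp_iff_exists_int] at hz
    obtain ⟨n, hn⟩ := hz
    have h4t : (4 * t : ℝ) = 1 + 2 * n := by
      have hre : ((4 * t : ℝ) : ℂ) = ((1 + 2 * n : ℝ) : ℂ) := by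
        have hπI : (Real.pi : ℂ) * Complex.I ≠ 0 := by
          simp [Real.pi_ne_zero, Complex.I_ne_zero]
        apply mul_right_cancel₀ hπI
        push_cast
        push_cast at hn
        linear_combination hn
      exact_mod_cast hre
    have hnl : (-1 : ℝ) < (n:ℝ) := by linarith
    have hnr : (n:ℝ) < 2 := by linarith
    have hnl' : (-1 : ℤ) < n := by exact_mod_cast hnl
    have hnr' : n < 2 := by exact_mod_cast hnr
    interval_cases n
    · left; push_cast at h4t; linarith
    · right; push_cast at h4t; linarith
  · rintro ⟨hsval, htval⟩
    subst hsval
    have hz : Complex.exp (4 * Real.pi * Complex.I * t) = -1 := by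
      rcases htval with h | h <;> subst h
      · rw [show (4 : ℂ) * Real.pi * Complex.I * ((1/4 : ℝ) : ℂ) = Real.pi * Complex.I by
          push_cast; ring, Complex.exp_pi_mul_I]
      · rw [show (4 : ℂ) * Real.pi * Complex.I * ((3/4 : ℝ) : ℂ) =
            Real.pi * Complex.I + 2 * Real.pi * Complex.I by push_cast; ring,
          Complex.exp_add, Complex.exp_pi_mul_I, Complex.exp_two_pi_mul_I]
        ring
    rw [hz]
    push_cast
    ring
end

section
/- Let 1 ≤ a < b be integers and set s = (a-b)/(a+b). Then for t ∈ [0,1), the derivative (γ_{a,b}^s)'(t) = 0 if and only if t = h/(2(b-a)) for some odd integer h with 0 ≤ h ≤ 2(b-a); i.e., the singular points of γ_{a,b}^s are exactly the parameters t = h/(2(b-a)) with h odd. -/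
private lemma exp_eq_neg_one_iff' (z : ℂ) :
    Complex.exp z = -1 ↔ ∃ n : ℤ, z = (2 * n + 1) * Real.pi * Complex.I := by
  rw [show (-1 : ℂ) = Complex.exp (Real.pi * Complex.I) by rw [Complex.exp_pi_mul_I],
    Complex.exp_eq_exp_iff_exists_int]
  refine exists_congr fun n => ?_
  constructor <;> intro h <;> rw [h] <;> ring

/-- For `s = (a-b)/(a+b)` and `t ∈ [0,1)`, the derivative `(γ_{a,b}^s)'(t)` vanishes iff
`t = h/(2(b-a))` for some odd integer `h` with `0 ≤ h ≤ 2(b-a)`. -/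
theorem gamma_singular_iff (a b : ℤ) (ha : 1 ≤ a) (hab : a < b)
    (t : ℝ) (ht : t ∈ Set.Ico (0 : ℝ) 1) :
    deriv (gammaCurve a b (((a : ℝ) - b) / ((a : ℝ) + b))) t = 0 ↔
      ∃ h : ℤ, Odd h ∧ 0 ≤ h ∧ h ≤ 2 * (b - a) ∧ t = (h : ℝ) / (2 * ((b : ℝ) - a)) := by
  obtain ⟨ht0, ht1⟩ := ht
  have haR : (0:ℝ) < (a:ℝ) := by exact_mod_cast lt_of_lt_of_le one_pos ha
  have hbR : (0:ℝ) < (b:ℝ) := by exact_mod_cast lt_trans (lt_of_lt_of_le one_pos ha) hab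
  have habR : (a:ℝ) < (b:ℝ) := by exact_mod_cast hab
  have hbaR : (0:ℝ) < (b:ℝ) - a := by linarith
  have hba2 : (2:ℝ) * ((b:ℝ) - a) ≠ 0 := by positivity
  have hπ : (Real.pi : ℂ) ≠ 0 := Complex.ofReal_ne_zero.mpr Real.pi_ne_zero
  have hπI : (Real.pi : ℂ) * Complex.I ≠ 0 := mul_ne_zero hπ Complex.I_ne_zero
  have hA : (a:ℂ) ≠ 0 := by exact_mod_cast (by omega : a ≠ 0)
  have hB : (b:ℂ) ≠ 0 := by exact_mod_cast (by omega : b ≠ 0)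
  have hAB : (a:ℂ) + b ≠ 0 := by exact_mod_cast (by omega : a + b ≠ 0)
  set s : ℝ := ((a:ℝ) - b) / ((a:ℝ) + b) with hs_def
  have hD : HasDerivAt (gammaCurve a b s)
      ((1 - (s:ℂ)) * ((2 * (Real.pi:ℂ) * Complex.I * a) *
          Complex.exp ((2 * (Real.pi:ℂ) * Complex.I * a) * t)) +
       (1 + (s:ℂ)) * ((2 * (Real.pi:ℂ) * Complex.I * b) *
          Complex.exp ((2 * (Real.pi:ℂ) * Complex.I * b) * t))) t :=
    ((hasDerivAt_cexp_mul _ t).const_mul _).add ((hasDerivAt_cexp_mul _ t).const_mul _)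
  have hsC : ((s:ℝ):ℂ) = ((a:ℂ) - b) / ((a:ℂ) + b) := by
    rw [hs_def]; push_cast; ring
  have key : deriv (gammaCurve a b s) t =
      (4 * (Real.pi:ℂ) * Complex.I * a * b / ((a:ℂ) + b)) *
        (Complex.exp ((2 * (Real.pi:ℂ) * Complex.I * a) * t) +
          Complex.exp ((2 * (Real.pi:ℂ) * Complex.I * b) * t)) := by
    rw [hD.deriv, hsC]
    field_simp
    ring
  have hC : (4 * (Real.pi:ℂ) * Complex.I * a * b / ((a:ℂ) + b)) ≠ 0 :=
    div_ne_zero (mul_ne_zero (mul_ne_zero (mul_ne_zero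
      (mul_ne_zero (by norm_num : (4:ℂ) ≠ 0) hπ) Complex.I_ne_zero) hA) hB) hAB
  have hEa : Complex.exp ((2 * (Real.pi:ℂ) * Complex.I * a) * t) ≠ 0 := Complex.exp_ne_zero _
  have step1 : Complex.exp ((2 * (Real.pi:ℂ) * Complex.I * a) * t) +
      Complex.exp ((2 * (Real.pi:ℂ) * Complex.I * b) * t) = 0 ↔
      Complex.exp (2 * (Real.pi:ℂ) * Complex.I * ((b:ℂ) - a) * t) = -1 := by
    rw [show 2 * (Real.pi:ℂ) * Complex.I * ((b:ℂ) - a) * (t:ℂ) =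
        (2 * (Real.pi:ℂ) * Complex.I * b) * t - (2 * (Real.pi:ℂ) * Complex.I * a) * t by ring,
      Complex.exp_sub, div_eq_iff hEa]
    constructor <;> intro h <;> linear_combination h
  rw [key, mul_eq_zero, or_iff_right hC, step1, exp_eq_neg_one_iff']
  constructor
  · rintro ⟨n, hn⟩
    have hr : 2 * ((b:ℝ) - a) * t = 2 * (n:ℝ) + 1 := by
      have h2 : ((2 * ((b:ℝ) - a) * t : ℝ) : ℂ) = ((2 * (n:ℝ) + 1 : ℝ) : ℂ) := by
        apply mul_left_cancel₀ hπI
        push_cast at hn ⊢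
        linear_combination hn
      exact_mod_cast h2
    refine ⟨2 * n + 1, ⟨n, by ring⟩, ?_, ?_, ?_⟩
    · have h1 : (0:ℝ) ≤ ((2 * n + 1 : ℤ):ℝ) := by
        push_cast
        rw [← hr]
        exact mul_nonneg (by linarith) ht0
      exact_mod_cast h1
    · have h2 : ((2 * n + 1 : ℤ):ℝ) < ((2 * (b - a) : ℤ):ℝ) := by
        push_cast
        nlinarith [mul_pos (show (0:ℝ) < 2 * ((b:ℝ) - a) by linarith)
          (show (0:ℝ) < 1 - t by linarith)]
      exact le_of_lt (by exact_mod_cast h2)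
    · rw [eq_div_iff hba2]
      push_cast
      linarith [hr]
  · rintro ⟨h, ⟨k, hk⟩, h0, hle, hteq⟩
    refine ⟨k, ?_⟩
    have hh : (h:ℝ) = 2 * (k:ℝ) + 1 := by exact_mod_cast hk
    have hr : 2 * ((b:ℝ) - a) * t = 2 * (k:ℝ) + 1 := by
      rw [hteq, hh]
      field_simp
    have h2 : ((2 * ((b:ℝ) - a) * t : ℝ) : ℂ) = ((2 * (k:ℝ) + 1 : ℝ) : ℂ) := by
      exact_mod_cast hr
    push_cast at h2 ⊢
    linear_combination ((Real.pi:ℂ) * Complex.I) * h2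
end
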